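/- arXiv:math/0509635 — 5 statements merged into one kernel-verified Lean document; each statement's English description precedes it below -/
import Mathlib

section
/- Let D ⊆ ℂ be a domain (nonempty open connected set), let E ⊆ D be a finite set, and let (f_n) be a sequence of functions holomorphic on D that converges locally uniformly on D \ E to a function g : D \ E → ℂ. Then g extends to a holomorphic function G on all of D, and (f_n) converges locally uniformly on all of D to G. (In particular, if (f_n) is not normal on D and converges locally uniformly on D \ E, then the limit cannot be a finite holomorphic function, so f_n → ∞ on D \ E.) -/
open Filter Metric Set

/-- If a sequence of functions holomorphic on a domain `D` converges locally
uniformly on `D \ E` for a finite set `E ⊆ D`, then the limit extends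
holomorphically to `D` and the convergence is locally uniform on all of `D`. -/
theorem holomorphic_locally_uniform_limit_extends_over_finite_set
    (D : Set ℂ) (hD : IsOpen D) (hDconn : IsConnected D)
    (E : Set ℂ) (hE : E.Finite) (hED : E ⊆ D)
    (f : ℕ → ℂ → ℂ) (hf : ∀ n : ℕ, DifferentiableOn ℂ (f n) D)
    (g : ℂ → ℂ)
    (hconv : TendstoLocallyUniformlyOn f g Filter.atTop (D \ E)) :
    ∃ G : ℂ → ℂ, DifferentiableOn ℂ G D ∧ (∀ z ∈ D \ E, G z = g z) ∧
      TendstoLocallyUniformlyOn f G Filter.atTop D := by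
  have hDE : IsOpen (D \ E) := hD.sdiff hE.isClosed
  -- Key claim: every point of D has a neighborhood (within D) contained in D
  -- on which f is uniformly Cauchy.
  have key : ∀ z ∈ D, ∃ t ∈ nhdsWithin z D, t ⊆ D ∧ UniformCauchySeqOn f atTop t := by
    intro z hz
    by_cases hzE : z ∈ E
    · -- z ∈ E : use the maximum principle on a small closed ball around z.
      have hopen : IsOpen (D ∩ (E \ {z})ᶜ) :=
        hD.inter (hE.subset diff_subset).isClosed.isOpen_compl
      have hzmem : z ∈ D ∩ (E \ {z})ᶜ := ⟨hz, by simp⟩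
      obtain ⟨r, hr, hball⟩ := Metric.isOpen_iff.mp hopen z hzmem
      have hrr : (0:ℝ) < r / 2 := by linarith
      have hcb : closedBall z (r / 2) ⊆ D ∩ (E \ {z})ᶜ := by
        refine (closedBall_subset_ball ?_).trans hball; linarith
      -- the sphere lies in D \ E
      have hsph : sphere z (r / 2) ⊆ D \ E := by
        intro w hw
        have hw' : w ∈ closedBall z (r / 2) := sphere_subset_closedBall hw
        have hwD := hcb hw'
        refine ⟨hwD.1, fun hwE => ?_⟩
        have hwz : w ≠ z := by
          intro h; rw [mem_sphere, h, dist_self] at hw; exact hrr.ne hw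
        exact hwD.2 ⟨hwE, hwz⟩
      -- f converges uniformly on the sphere, hence is uniformly Cauchy there
      have hsphC : IsCompact (sphere z (r / 2)) := isCompact_sphere z (r / 2)
      have hTU : TendstoUniformlyOn f g atTop (sphere z (r / 2)) :=
        (tendstoLocallyUniformlyOn_iff_tendstoUniformlyOn_of_compact hsphC).mp
          (hconv.mono hsph)
      have hUC : UniformCauchySeqOn f atTop (sphere z (r / 2)) := hTU.uniformCauchySeqOn
      refine ⟨closedBall z (r / 2), ?_, fun w hw => (hcb hw).1, ?_⟩
      · exact nhdsWithin_le_nhds (closedBall_mem_nhds z hrr)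
      · rw [Metric.uniformCauchySeqOn_iff]
        intro ε hε
        rw [Metric.uniformCauchySeqOn_iff] at hUC
        obtain ⟨N, hN⟩ := hUC (ε / 2) (by linarith)
        refine ⟨N, fun m hm n hn x hx => ?_⟩
        have hdiff : DiffContOnCl ℂ (fun w => f m w - f n w) (ball z (r / 2)) := by
          refine DiffContOnCl.mk ?_ ?_
          · exact ((hf m).sub (hf n)).mono fun w hw =>
              (hcb (ball_subset_closedBall hw)).1
          · rw [closure_ball z hrr.ne']
            exact (((hf m).sub (hf n)).mono fun w hw => (hcb hw).1).continuousOn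
        have hbd : ∀ w ∈ frontier (ball z (r / 2)), ‖f m w - f n w‖ ≤ ε / 2 := by
          intro w hw
          rw [frontier_ball z hrr.ne'] at hw
          rw [← dist_eq_norm]
          exact (hN m hm n hn w hw).le
        have hmax := Complex.norm_le_of_forall_mem_frontier_norm_le
          isBounded_ball hdiff hbd (z := x) (by rw [closure_ball z hrr.ne']; exact hx)
        rw [dist_eq_norm]
        calc ‖f m x - f n x‖ ≤ ε / 2 := hmax
          _ < ε := by linarith
    · -- z ∈ D \ E : local uniform convergence gives a uniformly Cauchy neighborhood
      have hz' : z ∈ D \ E := ⟨hz, hzE⟩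
      obtain ⟨r, hr, hball⟩ := Metric.isOpen_iff.mp hDE z hz'
      have hrr : (0:ℝ) < r / 2 := by linarith
      have hcb : closedBall z (r / 2) ⊆ D \ E := by
        refine (closedBall_subset_ball ?_).trans hball; linarith
      have hTU : TendstoUniformlyOn f g atTop (closedBall z (r / 2)) :=
        (tendstoLocallyUniformlyOn_iff_tendstoUniformlyOn_of_compact
          (isCompact_closedBall z (r / 2))).mp (hconv.mono hcb)
      exact ⟨closedBall z (r / 2), nhdsWithin_le_nhds (closedBall_mem_nhds z hrr),
        fun w hw => (hcb hw).1, hTU.uniformCauchySeqOn⟩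
  -- pointwise limit
  set G : ℂ → ℂ := fun z => limUnder atTop (fun n => f n z) with hGdef
  have htend : ∀ z ∈ D, Tendsto (fun n => f n z) atTop (nhds (G z)) := by
    intro z hz
    obtain ⟨t, htm, -, hUC⟩ := key z hz
    exact (hUC.cauchySeq (mem_of_mem_nhdsWithin hz htm)).tendsto_limUnder
  have hTLU : TendstoLocallyUniformlyOn f G atTop D := by
    intro u hu x hx
    obtain ⟨t, htm, hts, hUC⟩ := key x hx
    have hTU : TendstoUniformlyOn f G atTop t :=
      hUC.tendstoUniformlyOn_of_tendsto (fun y hy => htend y (hts hy))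
    exact ⟨t, htm, hTU u hu⟩
  refine ⟨G, ?_, ?_, hTLU⟩
  · exact hTLU.differentiableOn (Filter.Eventually.of_forall hf) hD
  · intro z hz
    exact tendsto_nhds_unique (htend z hz.1) (hconv.tendsto_at hz)
end

section
/- Let a ∈ ℂ, let 0 < δ < ε/2, and let U ⊆ B(a, δ) be a simply connected domain. Let f : U → B(a, ε) be holomorphic and bijective. Then f has a fixed point ξ ∈ U which satisfies |f'(ξ)| ≥ ε/(4δ). -/
/-!
The inverse `g` of `f` maps `B(a, ε)` into `B(a, δ)` and is holomorphic: being injective, `f` is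
nowhere locally constant, hence open at every point, so `g` is continuous; the critical points of
`f` are isolated, so the inverse function theorem makes `g` holomorphic on a punctured
neighbourhood of each value, and Riemann's removable singularity theorem fills in the puncture.
For `x ∈ B̄(a, δ)` the disc `B̄(x, ε/2)` still lies in `B(a, ε)`, so Cauchy's estimate gives
`|g'| ≤ 2δ/ε < 1` on `B̄(a, δ)`. Thus `g` is a contraction of `B̄(a, δ)`; its fixed point `ξ` lies
in `U`, is fixed by `f`, and `|f'(ξ)| = 1/|g'(ξ)| ≥ ε/(2δ)`.
-/

open Filter Function Metric Set Topology

lemma not_eventually_eq_of_injOn {X Y : Type*} [TopologicalSpace X] {f : X → Y} {s : Set X}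
    {z : X} [(𝓝[≠] z).NeBot] (hs : s ∈ 𝓝 z) (hf : InjOn f s) : ¬∀ᶠ x in 𝓝 z, f x = f z := by
  intro h
  have h' : ∀ᶠ x in 𝓝[≠] z, (f x = f z ∧ x ∈ s) ∧ x ≠ z :=
    (eventually_nhdsWithin_of_eventually_nhds (h.and hs)).and self_mem_nhdsWithin
  obtain ⟨x, ⟨hfx, hx⟩, hxz⟩ := h'.exists
  exact hxz (hf hx (mem_of_mem_nhds hs) hfx)

lemma nhdsNE_le_map_nhdsNE {X Y : Type*} [TopologicalSpace X] [TopologicalSpace Y] {f : X → Y}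
    {z : X} (h : 𝓝 (f z) ≤ map f (𝓝 z)) : 𝓝[≠] (f z) ≤ map f (𝓝[≠] z) :=
  calc 𝓝[≠] (f z) ≤ map f (𝓝 z) ⊓ 𝓟 {f z}ᶜ := inf_le_inf_right _ h
    _ = map f (𝓝 z ⊓ 𝓟 (f ⁻¹' {f z}ᶜ)) := map_inf_principal_preimage.symm
    _ ≤ map f (𝓝[≠] z) :=
      map_mono (inf_le_inf_left _ (principal_mono.2 fun _ hx hxz => hx (congrArg f hxz)))

lemma continuousAt_of_nhds_le_map_nhds {X Y : Type*} [TopologicalSpace X] [TopologicalSpace Y]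
    {f : X → Y} {g : Y → X} {z : X} (h : 𝓝 (f z) ≤ map f (𝓝 z))
    (hg : ∀ᶠ x in 𝓝 z, g (f x) = x) : ContinuousAt g (f z) := by
  rw [ContinuousAt, hg.self_of_nhds]
  calc map g (𝓝 (f z)) ≤ map g (map f (𝓝 z)) := map_mono h
    _ = 𝓝 z := by rw [map_map]; exact (map_congr hg).trans map_id'

lemma deriv_mul_deriv_eq_one_of_leftInvOn {𝕜 : Type*} [NontriviallyNormedField 𝕜] {f g : 𝕜 → 𝕜}
    {s : Set 𝕜} {x : 𝕜} (hs : s ∈ 𝓝 x) (hg : LeftInvOn g f s) (hgd : DifferentiableAt 𝕜 g (f x))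
    (hfd : DifferentiableAt 𝕜 f x) : deriv g (f x) * deriv f x = 1 :=
  ((hgd.hasDerivAt.comp x hfd.hasDerivAt).congr_of_eventuallyEq
    (eventually_of_mem hs fun _ hy => (hg hy).symm)).unique (hasDerivAt_id x)

section InverseFunction

variable {f g : ℂ → ℂ} {s : Set ℂ} {z : ℂ}

lemma nhds_le_map_nhds_of_injOn (hf : DifferentiableOn ℂ f s) (hs : s ∈ 𝓝 z)
    (hinj : InjOn f s) : 𝓝 (f z) ≤ map f (𝓝 z) :=
  (hf.analyticAt hs).eventually_constant_or_nhds_le_map_nhds.resolve_left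
    (not_eventually_eq_of_injOn hs hinj)

lemma eventually_deriv_ne_zero_of_injOn (hf : DifferentiableOn ℂ f s) (hs : s ∈ 𝓝 z)
    (hinj : InjOn f s) : ∀ᶠ x in 𝓝[≠] z, deriv f x ≠ 0 := by
  refine (hf.analyticAt hs).deriv.eventually_eq_zero_or_eventually_ne_zero.resolve_left
    fun h => not_eventually_eq_of_injOn hs hinj ?_
  obtain ⟨r, hr, hball⟩ := eventually_nhds_iff_ball.1 (h.and hs)
  filter_upwards [ball_mem_nhds z hr] with x hx
  exact isOpen_ball.is_const_of_deriv_eq_zero (convex_ball z r).isPreconnected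
    (hf.mono fun y hy => (hball y hy).2) (fun y hy => (hball y hy).1) hx (mem_ball_self hr)

lemma hasStrictDerivAt_of_leftInvOn (hf : DifferentiableOn ℂ f s) (hs : s ∈ 𝓝 z)
    (hg : LeftInvOn g f s) (hz : deriv f z ≠ 0) : HasStrictDerivAt g (deriv f z)⁻¹ (f z) :=
  (hf.analyticAt hs).hasStrictDerivAt.to_local_left_inverse hz
    (eventually_of_mem hs fun _ hy => hg hy)

theorem differentiableAt_of_leftInvOn (hf : DifferentiableOn ℂ f s) (hs : IsOpen s)
    (hg : LeftInvOn g f s) (hz : z ∈ s) : DifferentiableAt ℂ g (f z) := by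
  have hsz := hs.mem_nhds hz
  have hopen := nhds_le_map_nhds_of_injOn hf hsz hg.injOn
  have hcont := continuousAt_of_nhds_le_map_nhds hopen (eventually_of_mem hsz fun _ hx => hg hx)
  refine (Complex.analyticAt_of_differentiable_on_punctured_nhds_of_continuousAt
    (nhdsNE_le_map_nhdsNE hopen (eventually_map.2 ?_)) hcont).differentiableAt
  filter_upwards [nhdsWithin_le_nhds (hs.eventually_mem hz),
    eventually_deriv_ne_zero_of_injOn hf hsz hg.injOn] with x hxs hx
  exact (hasStrictDerivAt_of_leftInvOn hf (hs.mem_nhds hxs) hg hx).hasDerivAt.differentiableAt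

theorem differentiableOn_image_of_leftInvOn (hf : DifferentiableOn ℂ f s) (hs : IsOpen s)
    (hg : LeftInvOn g f s) : DifferentiableOn ℂ g (f '' s) := by
  rintro _ ⟨z, hz, rfl⟩
  exact (differentiableAt_of_leftInvOn hf hs hg hz).differentiableWithinAt

end InverseFunction

lemma norm_deriv_le_div_of_closedBall_subset {g : ℂ → ℂ} {V : Set ℂ} {x b : ℂ} {t r : ℝ}
    (ht : 0 < t) (hx : closedBall x t ⊆ V) (hd : DifferentiableOn ℂ g V)
    (hmaps : MapsTo g V (closedBall b r)) : ‖deriv g x‖ ≤ r / t := by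
  simpa using Complex.norm_deriv_le_of_forall_mem_sphere_norm_le ht
    ((hd.sub_const b).diffContOnCl_ball hx) fun z hz =>
      mem_closedBall_iff_norm.1 (hmaps (hx (sphere_subset_closedBall hz)))

lemma exists_fixedPoint_of_lipschitzOnWith {X : Type*} [MetricSpace X] {g : X → X} {s : Set X}
    {K : NNReal} (hs : IsComplete s) (hne : s.Nonempty) (hmaps : MapsTo g s s) (hK : K < 1)
    (hlip : LipschitzOnWith K g s) : ∃ x ∈ s, g x = x := by
  obtain ⟨x, hx⟩ := hne
  obtain ⟨y, hy, hfix, -⟩ := ContractingWith.exists_fixedPoint' hs hmaps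
    ⟨hK, hlip.mapsToRestrict hmaps⟩ hx (edist_ne_top _ _)
  exact ⟨y, hy, hfix⟩

lemma exists_fixedPoint_norm_deriv_le_of_mapsTo {g : ℂ → ℂ} {a : ℂ} {δ ε : ℝ} (hδ : 0 ≤ δ)
    (hδε : δ < ε / 2) (hd : DifferentiableOn ℂ g (ball a ε))
    (hmaps : MapsTo g (ball a ε) (closedBall a δ)) :
    ∃ ξ ∈ closedBall a δ, g ξ = ξ ∧ ‖deriv g ξ‖ ≤ δ / (ε / 2) := by
  have hsub : ∀ x ∈ closedBall a δ, closedBall x (ε / 2) ⊆ ball a ε := fun x hx =>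
    closedBall_subset_ball' (by linarith [mem_closedBall.1 hx])
  have hbound : ∀ x ∈ closedBall a δ, ‖deriv g x‖ ≤ δ / (ε / 2) := fun x hx =>
    norm_deriv_le_div_of_closedBall_subset (by linarith) (hsub x hx) hd hmaps
  have hlip : LipschitzOnWith (δ / (ε / 2)).toNNReal g (closedBall a δ) := by
    refine (convex_closedBall a δ).lipschitzOnWith_of_nnnorm_deriv_le (fun x hx =>
      hd.differentiableAt (isOpen_ball.mem_nhds (hsub x hx (mem_closedBall_self (by linarith)))))
      fun x hx => ?_
    rw [← NNReal.coe_le_coe, coe_nnnorm, Real.coe_toNNReal']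
    exact le_max_of_le_left (hbound x hx)
  have hK : (δ / (ε / 2)).toNNReal < 1 := by
    rw [Real.toNNReal_lt_one, div_lt_one (by linarith)]
    exact hδε
  obtain ⟨ξ, hξ, hfix⟩ := exists_fixedPoint_of_lipschitzOnWith isClosed_closedBall.isComplete
    (nonempty_closedBall.2 hδ) (hmaps.mono_left (closedBall_subset_ball (by linarith))) hK hlip
  exact ⟨ξ, hξ, hfix, hbound ξ hξ⟩

theorem fixed_point_of_univalent_island_general
    (a : ℂ) (δ ε : ℝ) (hδ : 0 < δ) (hδε : δ < ε / 2)
    (U : Set ℂ) (hU : IsOpen U)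
    (hUsub : U ⊆ Metric.ball a δ)
    (f : ℂ → ℂ) (hf : DifferentiableOn ℂ f U)
    (hbij : Set.BijOn f U (Metric.ball a ε)) :
    ∃ ξ ∈ U, f ξ = ξ ∧ ε / (4 * δ) ≤ ‖deriv f ξ‖ := by
  set g := invFunOn f U
  have hinv : InvOn g f U (ball a ε) := hbij.invOn_invFunOn
  have hgU : MapsTo g (ball a ε) U := (hbij.symm hinv.symm).mapsTo
  have hgd : DifferentiableOn ℂ g (ball a ε) :=
    hbij.image_eq ▸ differentiableOn_image_of_leftInvOn hf hU hinv.1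
  obtain ⟨ξ, hξ, hfix, hgξ⟩ := exists_fixedPoint_norm_deriv_le_of_mapsTo hδ.le hδε hgd
    fun x hx => ball_subset_closedBall (hUsub (hgU hx))
  have hξε : ξ ∈ ball a ε := closedBall_subset_ball (by linarith) hξ
  have hξU : ξ ∈ U := hfix ▸ hgU hξε
  have hfξ : f ξ = ξ := by simpa [hfix] using hinv.2 hξε
  have hchain : deriv g ξ * deriv f ξ = 1 := by
    simpa [hfξ] using deriv_mul_deriv_eq_one_of_leftInvOn (hU.mem_nhds hξU) hinv.1
      (by rw [hfξ]; exact hgd.differentiableAt (isOpen_ball.mem_nhds hξε))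
      (hf.differentiableAt (hU.mem_nhds hξU))
  refine ⟨ξ, hξU, hfξ, ?_⟩
  calc ε / (4 * δ) ≤ (δ / (ε / 2))⁻¹ := by
        rw [inv_div, div_div]
        exact div_le_div_of_nonneg_left (by linarith) (by positivity) (by linarith)
    _ ≤ ‖deriv g ξ‖⁻¹ := inv_anti₀ (norm_pos_iff.2 (left_ne_zero_of_mul_eq_one hchain)) hgξ
    _ = ‖deriv f ξ‖ := by rw [← norm_inv, eq_inv_of_mul_eq_one_right hchain]

/-- A holomorphic bijection from a simply connected domain `U ⊆ B(a, δ)` onto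
`B(a, ε)`, with `0 < δ < ε/2`, has a fixed point `ξ ∈ U` with
`|f'(ξ)| ≥ ε / (4δ)`. -/
theorem fixed_point_of_univalent_island
    (a : ℂ) (δ ε : ℝ) (hδ : 0 < δ) (hδε : δ < ε / 2)
    (U : Set ℂ) (hU : IsOpen U) (hUconn : IsConnected U)
    (hUsc : SimplyConnectedSpace U) (hUsub : U ⊆ Metric.ball a δ)
    (f : ℂ → ℂ) (hf : DifferentiableOn ℂ f U)
    (hbij : Set.BijOn f U (Metric.ball a ε)) :
    ∃ ξ ∈ U, f ξ = ξ ∧ ε / (4 * δ) ≤ ‖deriv f ξ‖ :=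
  fixed_point_of_univalent_island_general a δ ε hδ hδε U hU hUsub f hf hbij
end

section
/- Let (z_k)_{k≥1} be a sequence of complex numbers with 0 < |z₁| ≤ |z₂| ≤ ..., let g(z) = ∏_{k=1}^∞ (1 − z/z_k), and let n ∈ ℕ and r > 0 satisfy: |z_n| ≤ r, 8r ≤ |z_{n+1}|, |z_{k+1}| ≥ 2|z_k| for all k ≥ n+1, and n·log(3/2) > 9/4. Then min_{|z| = 4r} |g(z)| > max_{|z| = r} |g(z)|. -/
/-!
Split the product after the first `n` factors. Since `|z_k| ≤ r` for `k < n`, each of these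
factors is at least `3/2` times larger on `|w| = 4r` than anywhere on `|w| = r`, a total gain
of `(3/2)^n > e^{9/4}`. The remaining zeros grow geometrically, so
`∑_{k ≥ n} |w / z_k| ≤ 2|w| / |z_n|`, which confines the tail of the product to
`[e^{-2}, e^{1/4}]` on both circles; the ratio of these bounds is exactly `e^{9/4}`.
-/

open Finset Filter Real

theorem exp_neg_two_mul_le_one_sub {u : ℝ} (hu₀ : 0 ≤ u) (hu : u ≤ 1 / 2) :
    exp (-(2 * u)) ≤ 1 - u := by
  have hexp : exp (-(2 * u)) * exp (2 * u) = 1 := by rw [← exp_add, neg_add_cancel, exp_zero]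
  nlinarith [add_one_le_exp (2 * u), exp_pos (-(2 * u)),
    mul_nonneg hu₀ (by linarith : 0 ≤ 1 - 2 * u)]

section Factors

variable {R : Type*} [SeminormedRing R] [NormOneClass R]

theorem norm_one_sub_le_exp_norm (x : R) : ‖1 - x‖ ≤ exp ‖x‖ :=
  calc ‖1 - x‖ ≤ ‖(1 : R)‖ + ‖x‖ := norm_sub_le 1 x
    _ = ‖x‖ + 1 := by rw [norm_one, add_comm]
    _ ≤ exp ‖x‖ := add_one_le_exp _

theorem exp_neg_two_mul_norm_le_norm_one_sub {x : R} (hx : ‖x‖ ≤ 1 / 2) :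
    exp (-(2 * ‖x‖)) ≤ ‖1 - x‖ :=
  calc exp (-(2 * ‖x‖)) ≤ 1 - ‖x‖ := exp_neg_two_mul_le_one_sub (norm_nonneg x) hx
    _ = ‖(1 : R)‖ - ‖x‖ := by rw [norm_one]
    _ ≤ ‖1 - x‖ := norm_sub_norm_le 1 x

theorem three_halves_mul_one_add_le_norm_one_sub {u : ℝ} {y : R} (hu : 1 ≤ u)
    (hy : 4 * u ≤ ‖y‖) : 3 / 2 * (1 + u) ≤ ‖1 - y‖ :=
  calc 3 / 2 * (1 + u) ≤ ‖y‖ - ‖(1 : R)‖ := by rw [norm_one]; linarith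
    _ ≤ ‖1 - y‖ := norm_sub_rev (1 : R) y ▸ norm_sub_norm_le y 1

variable {ι : Type*}

theorem prod_norm_one_sub_le_exp_sum (s : Finset ι) (x : ι → R) :
    ∏ k ∈ s, ‖1 - x k‖ ≤ exp (∑ k ∈ s, ‖x k‖) := by
  rw [exp_sum]
  exact prod_le_prod (fun _ _ ↦ norm_nonneg _) fun k _ ↦ norm_one_sub_le_exp_norm (x k)

theorem exp_neg_two_mul_sum_le_prod_norm_one_sub {s : Finset ι} {x : ι → R}
    (hx : ∀ k ∈ s, ‖x k‖ ≤ 1 / 2) :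
    exp (-(2 * ∑ k ∈ s, ‖x k‖)) ≤ ∏ k ∈ s, ‖1 - x k‖ := by
  rw [mul_sum, ← sum_neg_distrib, exp_sum]
  exact prod_le_prod (fun _ _ ↦ (exp_pos _).le) fun k hk ↦
    exp_neg_two_mul_norm_le_norm_one_sub (hx k hk)

end Factors

section HasProd

variable {ι : Type*} {f : ι → ℝ} {a C : ℝ}

theorem HasProd.le_prod_mul (hf : HasProd f a) (hf₀ : ∀ k, 0 ≤ f k) (s : Finset ι)
    (hC : ∀ t : Finset ι, Disjoint t s → ∏ k ∈ t, f k ≤ C) : a ≤ (∏ k ∈ s, f k) * C := by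
  classical
  refine le_of_tendsto hf ?_
  filter_upwards [eventually_ge_atTop s] with t hst
  rw [← prod_sdiff hst, mul_comm]
  exact mul_le_mul_of_nonneg_left (hC _ sdiff_disjoint) (prod_nonneg fun k _ ↦ hf₀ k)

theorem HasProd.prod_mul_le (hf : HasProd f a) (hf₀ : ∀ k, 0 ≤ f k) (s : Finset ι)
    (hC : ∀ t : Finset ι, Disjoint t s → C ≤ ∏ k ∈ t, f k) : (∏ k ∈ s, f k) * C ≤ a := by
  classical
  refine ge_of_tendsto hf ?_
  filter_upwards [eventually_ge_atTop s] with t hst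
  rw [← prod_sdiff hst, mul_comm _ (∏ k ∈ s, f k)]
  exact mul_le_mul_of_nonneg_left (hC _ sdiff_disjoint) (prod_nonneg fun k _ ↦ hf₀ k)

variable {R : Type*} [SeminormedCommRing R] [NormOneClass R] [NormMulClass R]
  {x : ι → R} {p : R} {S : ℝ}

theorem HasProd.norm_le_prod_mul_exp (hp : HasProd (fun k ↦ 1 - x k) p) (s : Finset ι)
    (hS : ∀ t : Finset ι, Disjoint t s → ∑ k ∈ t, ‖x k‖ ≤ S) :
    ‖p‖ ≤ (∏ k ∈ s, ‖1 - x k‖) * exp S :=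
  hp.norm.le_prod_mul (fun _ ↦ norm_nonneg _) s fun t ht ↦
    (prod_norm_one_sub_le_exp_sum t x).trans (exp_le_exp.2 (hS t ht))

theorem HasProd.prod_mul_exp_le_norm (hp : HasProd (fun k ↦ 1 - x k) p) (s : Finset ι)
    (hS : ∀ t : Finset ι, Disjoint t s → ∑ k ∈ t, ‖x k‖ ≤ S)
    (hx : ∀ k ∉ s, ‖x k‖ ≤ 1 / 2) :
    (∏ k ∈ s, ‖1 - x k‖) * exp (-(2 * S)) ≤ ‖p‖ :=
  hp.norm.prod_mul_le (fun _ ↦ norm_nonneg _) s fun t ht ↦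
    (exp_le_exp.2 (by linarith [hS t ht])).trans <| exp_neg_two_mul_sum_le_prod_norm_one_sub
      fun k hk ↦ hx k (disjoint_left.1 ht hk)

end HasProd

section Lacunary

variable {a : ℕ → ℝ} {n : ℕ}

theorem two_pow_mul_le_of_two_mul_le (h : ∀ k, n ≤ k → 2 * a k ≤ a (k + 1)) (j : ℕ) :
    2 ^ j * a n ≤ a (n + j) := by
  induction j with
  | zero => simp
  | succ j ih =>
    calc 2 ^ (j + 1) * a n = 2 * (2 ^ j * a n) := by ring
      _ ≤ 2 * a (n + j) := by linarith
      _ ≤ a (n + j + 1) := h _ (Nat.le_add_right n j)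

theorem apply_le_apply_of_two_mul_le (ha : 0 ≤ a n) (h : ∀ k, n ≤ k → 2 * a k ≤ a (k + 1)) {k : ℕ}
    (hk : n ≤ k) : a n ≤ a k := by
  obtain ⟨j, rfl⟩ := Nat.exists_eq_add_of_le hk
  calc a n ≤ 2 ^ j * a n := le_mul_of_one_le_left ha (one_le_pow₀ one_le_two)
    _ ≤ a (n + j) := two_pow_mul_le_of_two_mul_le h j

theorem sum_one_half_pow_sub_le_two {t : Finset ℕ} (ht : ∀ k ∈ t, n ≤ k) :
    ∑ k ∈ t, (1 / 2 : ℝ) ^ (k - n) ≤ 2 := by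
  rw [← sum_image fun k hk l hl (hkl : k - n = l - n) ↦ by have := ht k hk; have := ht l hl; omega]
  calc ∑ j ∈ t.image (· - n), (1 / 2 : ℝ) ^ j ≤ ∑' j : ℕ, (1 / 2 : ℝ) ^ j :=
        summable_geometric_two.sum_le_tsum _ fun _ _ ↦ by positivity
    _ = 2 := tsum_geometric_two

theorem sum_div_le_two_mul_div_of_two_mul_le (ha : 0 < a n)
    (h : ∀ k, n ≤ k → 2 * a k ≤ a (k + 1)) {ρ : ℝ} (hρ : 0 ≤ ρ) {t : Finset ℕ}
    (ht : Disjoint t (range n)) : ∑ k ∈ t, ρ / a k ≤ 2 * ρ / a n := by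
  have hn : ∀ k ∈ t, n ≤ k := fun k hk ↦ not_lt.1 fun h ↦ disjoint_left.1 ht hk (mem_range.2 h)
  have hterm : ∀ k ∈ t, ρ / a k ≤ ρ / a n * (1 / 2 : ℝ) ^ (k - n) := by
    intro k hk
    obtain ⟨j, rfl⟩ := Nat.exists_eq_add_of_le (hn k hk)
    calc ρ / a (n + j) ≤ ρ / (2 ^ j * a n) :=
          div_le_div_of_nonneg_left hρ (by positivity) (two_pow_mul_le_of_two_mul_le h j)
      _ = ρ / a n * (1 / 2 : ℝ) ^ (n + j - n) := by
          rw [Nat.add_sub_cancel_left, one_div_pow]; field_simp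
  calc ∑ k ∈ t, ρ / a k ≤ ∑ k ∈ t, ρ / a n * (1 / 2 : ℝ) ^ (k - n) := sum_le_sum hterm
    _ = ρ / a n * ∑ k ∈ t, (1 / 2 : ℝ) ^ (k - n) := (mul_sum _ _ _).symm
    _ ≤ ρ / a n * 2 := by gcongr; exact sum_one_half_pow_sub_le_two hn
    _ = 2 * ρ / a n := by ring

end Lacunary

section Head

variable {ι 𝕜 : Type*} [NormedField 𝕜] (s : Finset ι) (z : ι → 𝕜)

theorem prod_norm_one_sub_div_le (w : 𝕜) :
    ∏ k ∈ s, ‖1 - w / z k‖ ≤ ∏ k ∈ s, (1 + ‖w‖ / ‖z k‖) :=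
  prod_le_prod (fun _ _ ↦ norm_nonneg _) fun k _ ↦ by
    simpa only [norm_one, norm_div] using norm_sub_le (1 : 𝕜) (w / z k)

theorem three_halves_pow_mul_prod_le_prod_norm_one_sub_div {r : ℝ} {w : 𝕜} (hw : ‖w‖ = 4 * r)
    (hz : ∀ k ∈ s, 0 < ‖z k‖ ∧ ‖z k‖ ≤ r) :
    (3 / 2) ^ #s * ∏ k ∈ s, (1 + r / ‖z k‖) ≤ ∏ k ∈ s, ‖1 - w / z k‖ := by
  rw [← prod_const, ← prod_mul_distrib]
  refine prod_le_prod (fun k hk ↦ ?_) fun k hk ↦ ?_ <;> obtain ⟨hzk, hzr⟩ := hz k hk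
  · have hr : 0 < r := hzk.trans_le hzr
    positivity
  · refine three_halves_mul_one_add_le_norm_one_sub ((one_le_div hzk).2 hzr) ?_
    rw [norm_div, hw, mul_div_assoc]

end Head

section LacunaryProduct

variable {𝕜 : Type*} [NormedField 𝕜] {z : ℕ → 𝕜} {n : ℕ} {w p : 𝕜}

theorem sum_norm_div_le_of_two_mul_le (hzn : 0 < ‖z n‖)
    (h : ∀ k, n ≤ k → 2 * ‖z k‖ ≤ ‖z (k + 1)‖) (w : 𝕜) {t : Finset ℕ}
    (ht : Disjoint t (range n)) : ∑ k ∈ t, ‖w / z k‖ ≤ 2 * ‖w‖ / ‖z n‖ := by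
  simpa only [norm_div] using sum_div_le_two_mul_div_of_two_mul_le hzn h (norm_nonneg w) ht

theorem HasProd.norm_le_prod_range_mul_exp (hp : HasProd (fun k ↦ 1 - w / z k) p)
    (hzn : 0 < ‖z n‖) (h : ∀ k, n ≤ k → 2 * ‖z k‖ ≤ ‖z (k + 1)‖) :
    ‖p‖ ≤ (∏ k ∈ range n, ‖1 - w / z k‖) * exp (2 * ‖w‖ / ‖z n‖) :=
  hp.norm_le_prod_mul_exp _ fun _ ↦ sum_norm_div_le_of_two_mul_le hzn h w

theorem HasProd.prod_range_mul_exp_le_norm (hp : HasProd (fun k ↦ 1 - w / z k) p)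
    (hzn : 0 < ‖z n‖) (h : ∀ k, n ≤ k → 2 * ‖z k‖ ≤ ‖z (k + 1)‖) (hw : 2 * ‖w‖ ≤ ‖z n‖) :
    (∏ k ∈ range n, ‖1 - w / z k‖) * exp (-(2 * (2 * ‖w‖ / ‖z n‖))) ≤ ‖p‖ := by
  refine hp.prod_mul_exp_le_norm _ (fun _ ↦ sum_norm_div_le_of_two_mul_le hzn h w) fun k hk ↦ ?_
  have hnk : ‖z n‖ ≤ ‖z k‖ := apply_le_apply_of_two_mul_le hzn.le h (by simpa using hk)
  rw [norm_div, div_le_iff₀ (hzn.trans_le hnk)]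
  linarith

end LacunaryProduct

theorem exp_lt_pow_of_lt_mul_log {x b : ℝ} {n : ℕ} (hb : 0 < b) (h : x < n * log b) :
    exp x < b ^ n := by
  simpa [exp_nat_mul, exp_log hb] using exp_lt_exp.2 h

theorem csSup_image_lt_csInf_image {α : Type*} {f : α → ℝ} {s t : Set α} (hs : s.Nonempty)
    (ht : t.Nonempty) {M m : ℝ} (hM : ∀ x ∈ s, f x ≤ M) (hMm : M < m) (hm : ∀ y ∈ t, m ≤ f y) :
    sSup (f '' s) < sInf (f '' t) :=
  (csSup_le (hs.image f) (Set.forall_mem_image.2 hM)).trans_lt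
    (hMm.trans_le (le_csInf (ht.image f) (Set.forall_mem_image.2 hm)))

-- The sequence is indexed from `0`: the paper's `z_k` is `z (k - 1)`.
theorem min_modulus_on_larger_circle_gt_max_modulus_general
    (z : ℕ → ℂ)
    (hz0 : 0 < ‖z 0‖)
    (hzmono : ∀ k : ℕ, ‖z k‖ ≤ ‖z (k + 1)‖)
    (g : ℂ → ℂ)
    (hgprod : ∀ w : ℂ, HasProd (fun k : ℕ => 1 - w / z k) (g w))
    (n : ℕ) (r : ℝ) (hr : 0 < r)
    (h₁ : ‖z (n - 1)‖ ≤ r)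
    (h₂ : 8 * r ≤ ‖z n‖)
    (h₃ : ∀ k : ℕ, n ≤ k → 2 * ‖z k‖ ≤ ‖z (k + 1)‖)
    (h₄ : (9 : ℝ) / 4 < (n : ℝ) * Real.log (3 / 2)) :
    sSup ((fun w : ℂ => ‖g w‖) '' Metric.sphere (0 : ℂ) r) <
      sInf ((fun w : ℂ => ‖g w‖) '' Metric.sphere (0 : ℂ) (4 * r)) := by
  have hmono : Monotone (‖z ·‖) := monotone_nat_of_le_succ hzmono
  have hzn : 0 < ‖z n‖ := by linarith
  have hhead : ∀ k ∈ range n, 0 < ‖z k‖ ∧ ‖z k‖ ≤ r := fun k hk ↦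
    ⟨hz0.trans_le (hmono k.zero_le), (hmono (by rw [mem_range] at hk; omega)).trans h₁⟩
  set B := ∏ k ∈ range n, (1 + r / ‖z k‖)
  have hupper : ∀ w ∈ Metric.sphere (0 : ℂ) r, ‖g w‖ ≤ B * exp (1 / 4) := by
    intro w hw
    rw [mem_sphere_zero_iff_norm] at hw
    refine ((hgprod w).norm_le_prod_range_mul_exp hzn h₃).trans ?_
    gcongr ?_ * exp ?_
    · simpa only [hw] using prod_norm_one_sub_div_le (range n) z w
    · rw [hw, div_le_iff₀ hzn]; linarith
  have hlower : ∀ w ∈ Metric.sphere (0 : ℂ) (4 * r), (3 / 2) ^ n * B * exp (-2) ≤ ‖g w‖ := by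
    intro w hw
    rw [mem_sphere_zero_iff_norm] at hw
    refine le_trans ?_ ((hgprod w).prod_range_mul_exp_le_norm hzn h₃ (by linarith))
    gcongr ?_ * exp ?_
    · simpa using three_halves_pow_mul_prod_le_prod_norm_one_sub_div (range n) z hw hhead
    · have : 2 * ‖w‖ / ‖z n‖ ≤ 1 := by rw [hw, div_le_iff₀ hzn]; linarith
      linarith
  have hB : 0 < B := prod_pos fun k hk ↦ by have := (hhead k hk).1; positivity
  have hgap : B * exp (1 / 4) < (3 / 2) ^ n * B * exp (-2) :=
    calc B * exp (1 / 4) = exp (9 / 4) * B * exp (-2) := by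
          rw [mul_comm (exp _), mul_assoc, ← exp_add]; norm_num
      _ < (3 / 2) ^ n * B * exp (-2) := by
          gcongr; exact exp_lt_pow_of_lt_mul_log (by norm_num) h₄
  exact csSup_image_lt_csInf_image (NormedSpace.sphere_nonempty.2 hr.le)
    (NormedSpace.sphere_nonempty.2 (by positivity)) hupper hgap hlower

/-- Key estimate in Lemma on products with sparse zeros: if
`g(z) = ∏_{k≥1} (1 - z/z_k)` with `0 < |z_1| ≤ |z_2| ≤ ⋯`,
and `n ≥ 1`, `r > 0` satisfy `|z_n| ≤ r`, `8r ≤ |z_{n+1}|`,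
`|z_{k+1}| ≥ 2 |z_k|` for `k ≥ n + 1` and `n log(3/2) > 9/4`, then
`min_{|z| = 4r} |g(z)| > max_{|z| = r} |g(z)|`.
(Here the sequence is indexed from `0`, so the paper's `z_k` is `z (k - 1)`.) -/
theorem min_modulus_on_larger_circle_gt_max_modulus
    (z : ℕ → ℂ)
    (hz0 : 0 < ‖z 0‖)
    (hzmono : ∀ k : ℕ, ‖z k‖ ≤ ‖z (k + 1)‖)
    (g : ℂ → ℂ)
    (hgprod : ∀ w : ℂ, HasProd (fun k : ℕ => 1 - w / z k) (g w))
    (n : ℕ) (hn : 1 ≤ n) (r : ℝ) (hr : 0 < r)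
    (h₁ : ‖z (n - 1)‖ ≤ r)
    (h₂ : 8 * r ≤ ‖z n‖)
    (h₃ : ∀ k : ℕ, n ≤ k → 2 * ‖z k‖ ≤ ‖z (k + 1)‖)
    (h₄ : (9 : ℝ) / 4 < (n : ℝ) * Real.log (3 / 2)) :
    sSup ((fun w : ℂ => ‖g w‖) '' Metric.sphere (0 : ℂ) r) <
      sInf ((fun w : ℂ => ‖g w‖) '' Metric.sphere (0 : ℂ) (4 * r)) :=
  min_modulus_on_larger_circle_gt_max_modulus_general z hz0 hzmono g hgprod n r hr h₁ h₂ h₃ h₄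
end

section
/- Let r₀ > 0 and let T : [r₀, ∞) → [e, ∞) be increasing and continuous. Define F := {r ≥ r₀ : T(r(1 + 1/(log T(r))²)) > e·T(r)}. Then ∫_F (1/t) dt ≤ π²/6. -/
/-!
Sort the points `r` of the exceptional set `F` by the integer part `n` of `log T(r)`. If `a`
is the infimum of the `n`-th level, continuity gives `log T(a) ≥ n` and
`T(a (1 + 1/(log T(a))²)) ≥ e T(a)`, so by monotonicity every point of the level beyond
`a (1 + 1/(log T(a))²)` would have `log T ≥ n + 1`. Hence the level lies in an interval of
logarithmic measure `log (1 + 1/(log T(a))²) ≤ 1/n²`, and summing over `n` gives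
`ζ(2) = π²/6`.
-/

open Real Set MeasureTheory

noncomputable def logMeasure : Measure ℝ :=
  volume.withDensity fun t => ENNReal.ofReal (1 / t)

lemma logMeasure_apply (s : Set ℝ) : logMeasure s = ∫⁻ t in s, ENNReal.ofReal (1 / t) :=
  withDensity_apply' _ s

lemma logMeasure_Icc {a b : ℝ} (ha : 0 < a) (hab : a ≤ b) :
    logMeasure (Icc a b) = ENNReal.ofReal (log (b / a)) := by
  have hint : IntegrableOn (fun t : ℝ => 1 / t) (Icc a b) :=
    (continuousOn_const.div continuousOn_id fun t ht => (ha.trans_le ht.1).ne').integrableOn_Icc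
  have hnonneg : 0 ≤ᵐ[volume.restrict (Icc a b)] fun t : ℝ => 1 / t :=
    (ae_restrict_mem measurableSet_Icc).mono fun t ht => (one_div_pos.2 (ha.trans_le ht.1)).le
  rw [logMeasure_apply, ← ofReal_integral_eq_lintegral_ofReal hint hnonneg,
    integral_Icc_eq_integral_Ioc, ← intervalIntegral.integral_of_le hab,
    integral_one_div_of_pos ha (ha.trans_le hab)]

lemma setIntegral_one_div_eq_toReal_logMeasure {s : Set ℝ} (hs : s ⊆ Ioi 0) :
    ∫ t in s, 1 / t = (logMeasure s).toReal := by
  have hnonneg : 0 ≤ᵐ[volume.restrict s] fun t : ℝ => 1 / t :=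
    ae_restrict_of_ae_restrict_of_subset hs
      ((ae_restrict_mem measurableSet_Ioi).mono fun t ht => (one_div_pos.2 ht).le)
  rw [integral_eq_lintegral_of_nonneg_ae hnonneg (by fun_prop), logMeasure_apply]

noncomputable def borelShift (T : ℝ → ℝ) (r : ℝ) : ℝ :=
  r * (1 + 1 / (log (T r)) ^ 2)

lemma le_borelShift (T : ℝ → ℝ) {r : ℝ} (hr : 0 ≤ r) : r ≤ borelShift T r :=
  le_mul_of_one_le_right hr (le_add_of_nonneg_right (by positivity))

lemma log_borelShift_div_le {T : ℝ → ℝ} {a m : ℝ} (ha : 0 < a) (hm : 0 < m)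
    (hmT : m ≤ log (T a)) : log (borelShift T a / a) ≤ 1 / m ^ 2 := by
  rw [borelShift, mul_div_cancel_left₀ _ ha.ne']
  calc log (1 + 1 / log (T a) ^ 2) ≤ 1 / log (T a) ^ 2 := by
        linarith [log_le_sub_one_of_pos (show 0 < 1 + 1 / log (T a) ^ 2 by positivity)]
    _ ≤ 1 / m ^ 2 := one_div_le_one_div_of_le (by positivity) (by gcongr)

lemma continuousOn_borelShift {T : ℝ → ℝ} {s : Set ℝ} (hT : ContinuousOn T s)
    (hlog : ∀ r ∈ s, log (T r) ≠ 0) : ContinuousOn (borelShift T) s := by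
  have hT0 : ∀ r ∈ s, T r ≠ 0 := fun r hr hr0 => hlog r hr (by rw [hr0, log_zero])
  exact continuousOn_id.mul (continuousOn_const.add
    (continuousOn_const.div ((hT.log hT0).pow 2) fun r hr => pow_ne_zero 2 (hlog r hr)))

def exceptionalSet (r₀ : ℝ) (T : ℝ → ℝ) : Set ℝ :=
  {r | r₀ ≤ r ∧ exp 1 * T r < T (borelShift T r)}

def exceptionalLevel (r₀ : ℝ) (T : ℝ → ℝ) (n : ℕ) : Set ℝ :=
  {r ∈ exceptionalSet r₀ T | (n : ℝ) ≤ log (T r) ∧ log (T r) < n + 1}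

section exceptional

variable {r₀ : ℝ} {T : ℝ → ℝ} (hval : ∀ r ∈ Ici r₀, exp 1 ≤ T r)
include hval

lemma one_le_log_of_exp_one_le {r : ℝ} (hr : r ∈ Ici r₀) : 1 ≤ log (T r) :=
  (le_log_iff_exp_le ((exp_pos 1).trans_le (hval r hr))).2 (hval r hr)

lemma exceptionalSet_subset_iUnion_exceptionalLevel :
    exceptionalSet r₀ T ⊆ ⋃ n, exceptionalLevel r₀ T n := fun r hr =>
  mem_iUnion.2 ⟨⌊log (T r)⌋₊, hr,
    Nat.floor_le (zero_le_one.trans (one_le_log_of_exp_one_le hval hr.1)), Nat.lt_floor_add_one _⟩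

variable (hr₀ : 0 < r₀) (hcont : ContinuousOn T (Ici r₀))
include hr₀ hcont

lemma le_of_mem_closure_exceptionalLevel {n : ℕ} {x : ℝ}
    (hx : x ∈ closure (exceptionalLevel r₀ T n)) :
    r₀ ≤ x ∧ (n : ℝ) ≤ log (T x) ∧ exp 1 * T x ≤ T (borelShift T x) := by
  have hsub : closure (exceptionalLevel r₀ T n) ⊆ Ici r₀ :=
    closure_minimal (fun r hr => hr.1.1) isClosed_Ici
  have hlog : ContinuousOn (fun r => log (T r)) (Ici r₀) :=
    hcont.log fun r hr => ((exp_pos 1).trans_le (hval r hr)).ne'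
  have hshift : ContinuousOn (fun r => T (borelShift T r)) (Ici r₀) :=
    hcont.comp (continuousOn_borelShift hcont fun r hr =>
        (zero_lt_one.trans_le (one_le_log_of_exp_one_le hval hr)).ne')
      fun r hr => hr.trans (le_borelShift T (hr₀.le.trans hr))
  refine ⟨hsub hx, le_on_closure (fun r hr => hr.2.1) continuousOn_const (hlog.mono hsub) hx,
    le_on_closure (fun r hr => hr.1.2.le) ((continuousOn_const.mul hcont).mono hsub)
      (hshift.mono hsub) hx⟩

variable (hmono : MonotoneOn T (Ici r₀))
include hmono

lemma exceptionalLevel_subset_Icc_sInf {n : ℕ} (hne : (exceptionalLevel r₀ T n).Nonempty) :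
    exceptionalLevel r₀ T n ⊆
      Icc (sInf (exceptionalLevel r₀ T n)) (borelShift T (sInf (exceptionalLevel r₀ T n))) := by
  set a := sInf (exceptionalLevel r₀ T n)
  have hbdd : BddBelow (exceptionalLevel r₀ T n) := ⟨r₀, fun r hr => hr.1.1⟩
  obtain ⟨har₀, hn, hjump⟩ :=
    le_of_mem_closure_exceptionalLevel hval hr₀ hcont (csInf_mem_closure hne hbdd)
  intro r hr
  refine ⟨csInf_le hbdd hr, le_of_not_gt fun hlt => hr.2.2.not_ge ?_⟩
  have hTa : 0 < T a := (exp_pos 1).trans_le (hval a har₀)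
  have hshift : T (borelShift T a) ≤ T r :=
    hmono (har₀.trans (le_borelShift T (hr₀.le.trans har₀))) hr.1.1 hlt.le
  calc (n : ℝ) + 1 ≤ log (T a) + 1 := by linarith
    _ = log (exp 1 * T a) := by rw [log_mul (exp_pos 1).ne' hTa.ne', log_exp, add_comm]
    _ ≤ log (T r) := log_le_log (by positivity) (hjump.trans hshift)

lemma logMeasure_exceptionalLevel_le (n : ℕ) :
    logMeasure (exceptionalLevel r₀ T n) ≤ ENNReal.ofReal (1 / (n : ℝ) ^ 2) := by
  rcases (exceptionalLevel r₀ T n).eq_empty_or_nonempty with hempty | hne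
  · simp [hempty]
  obtain ⟨r, hr⟩ := hne
  -- a nonempty level has `n ≥ 1`, which matters because `1 / 0 ^ 2 = 0`
  have hn : (0 : ℝ) < n := by linarith [one_le_log_of_exp_one_le hval hr.1.1, hr.2.2]
  set a := sInf (exceptionalLevel r₀ T n)
  obtain ⟨har₀, hna, -⟩ := le_of_mem_closure_exceptionalLevel hval hr₀ hcont
    (csInf_mem_closure ⟨r, hr⟩ ⟨r₀, fun r hr => hr.1.1⟩)
  have ha : 0 < a := hr₀.trans_le har₀
  calc logMeasure (exceptionalLevel r₀ T n) ≤ logMeasure (Icc a (borelShift T a)) :=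
        measure_mono (exceptionalLevel_subset_Icc_sInf hval hr₀ hcont hmono ⟨r, hr⟩)
    _ = ENNReal.ofReal (log (borelShift T a / a)) := logMeasure_Icc ha (le_borelShift T ha.le)
    _ ≤ ENNReal.ofReal (1 / (n : ℝ) ^ 2) :=
        ENNReal.ofReal_le_ofReal (log_borelShift_div_le ha hn hna)

lemma logMeasure_exceptionalSet_le :
    logMeasure (exceptionalSet r₀ T) ≤ ENNReal.ofReal (π ^ 2 / 6) :=
  calc logMeasure (exceptionalSet r₀ T) ≤ ∑' n, logMeasure (exceptionalLevel r₀ T n) :=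
        (measure_mono (exceptionalSet_subset_iUnion_exceptionalLevel hval)).trans
          (measure_iUnion_le _)
    _ ≤ ∑' n : ℕ, ENNReal.ofReal (1 / (n : ℝ) ^ 2) :=
        ENNReal.tsum_le_tsum (logMeasure_exceptionalLevel_le hval hr₀ hcont hmono)
    _ = ENNReal.ofReal (π ^ 2 / 6) := by
        rw [← ENNReal.ofReal_tsum_of_nonneg (fun n => by positivity) hasSum_zeta_two.summable,
          hasSum_zeta_two.tsum_eq]

end exceptional

open Real in
/-- **Borel-type growth lemma.** If `T : [r₀, ∞) → [e, ∞)` is increasing and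
continuous, then the exceptional set
`F = {r ≥ r₀ : T(r (1 + 1/(log T(r))²)) > e T(r)}` satisfies `∫_F dt/t ≤ π²/6`. -/
theorem borel_growth_lemma
    (r₀ : ℝ) (hr₀ : 0 < r₀) (T : ℝ → ℝ)
    (hval : ∀ r ∈ Set.Ici r₀, Real.exp 1 ≤ T r)
    (hmono : MonotoneOn T (Set.Ici r₀))
    (hcont : ContinuousOn T (Set.Ici r₀)) :
    ∫ t in {r : ℝ | r₀ ≤ r ∧
        Real.exp 1 * T r < T (r * (1 + 1 / (Real.log (T r)) ^ 2))},
      (1 / t) ≤ π ^ 2 / 6 := by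
  change ∫ t in exceptionalSet r₀ T, 1 / t ≤ π ^ 2 / 6
  rw [setIntegral_one_div_eq_toReal_logMeasure fun r hr => hr₀.trans_le hr.1]
  exact ENNReal.toReal_le_of_le_ofReal (by positivity)
    (logMeasure_exceptionalSet_le hval hr₀ hcont hmono)
end

section
/- Let b ∈ ℂ and ε > 0, and let W ⊆ ℂ be a bounded domain with closure contained in B(b, ε). Let h be holomorphic on an open set containing the closure of W, suppose |h(z) − b| = ε for every z on the boundary of W, and suppose h takes the value b at some point of W. Then h has a fixed point in W, i.e., there exists ξ ∈ W with h(ξ) = ξ. -/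
/-!
Deform `h - b`, which vanishes at a point of `W`, linearly into `h - id` through
`h - b - t (z - b)`, `0 ≤ t ≤ 1`. On `frontier W` these maps are bounded below by `ε - r > 0`,
where `closure W ⊆ B(b, r)` with `r < ε`. By the maximum modulus principle applied to their
reciprocals, a zero in `W` survives every perturbation smaller than that bound, so finitely many
small steps in `t` carry the zero from `t = 0` to `t = 1`.
-/

open Set Metric Bornology

section

variable {E : Type*} [NormedAddCommGroup E] [NormedSpace ℂ E] [Nontrivial E]

theorem exists_mem_eq_zero_of_norm_lt_of_le_norm_frontier {U : Set E} (hU : IsBounded U)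
    {φ : E → ℂ} (hφ : DiffContOnCl ℂ φ U) {δ : ℝ} (hfr : ∀ x ∈ frontier U, δ ≤ ‖φ x‖)
    {z₀ : E} (hz₀ : z₀ ∈ closure U) (hφz₀ : ‖φ z₀‖ < δ) : ∃ z ∈ U, φ z = 0 := by
  by_contra! hne
  have hδ : 0 < δ := (norm_nonneg _).trans_lt hφz₀
  have hne_cl : ∀ x ∈ closure U, φ x ≠ 0 := by
    intro x hx
    rw [closure_eq_self_union_frontier] at hx
    rcases hx with hxU | hxfr
    · exact hne x hxU
    · exact norm_pos_iff.mp (hδ.trans_le (hfr x hxfr))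
  have hinv_le : ‖(φ z₀)⁻¹‖ ≤ δ⁻¹ :=
    Complex.norm_le_of_forall_mem_frontier_norm_le hU (hφ.inv hne_cl)
      (fun x hx => by rw [Pi.inv_apply, norm_inv]; exact inv_anti₀ hδ (hfr x hx)) hz₀
  rw [norm_inv] at hinv_le
  exact hφz₀.not_ge ((inv_le_inv₀ (norm_pos_iff.mpr (hne_cl z₀ hz₀)) hδ).mp hinv_le)

theorem exists_mem_add_eq_zero_of_homotopy {U : Set E} (hU : IsBounded U) {f g : E → ℂ}
    (hf : DiffContOnCl ℂ f U) (hg : DiffContOnCl ℂ g U) {δ M : ℝ} (hδ : 0 < δ)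
    (hfr : ∀ t ∈ Icc (0 : ℝ) 1, ∀ x ∈ frontier U, δ ≤ ‖f x + t • g x‖)
    (hM : ∀ z ∈ U, ‖g z‖ ≤ M) (hf₀ : ∃ z ∈ U, f z = 0) : ∃ z ∈ U, f z + g z = 0 := by
  obtain ⟨N, hN⟩ := exists_nat_gt (M / δ)
  set n : ℕ := N + 1
  have hn : (0 : ℝ) < n := by positivity
  have hstep : M / n < δ := by
    rw [div_lt_iff₀ hn, ← div_lt_iff₀' hδ]
    exact hN.trans (by simp [n])
  have hzeros : ∀ k ≤ n, ∃ z ∈ U, f z + ((k : ℝ) / n) • g z = 0 := by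
    intro k
    induction k with
    | zero => simpa using hf₀
    | succ k ih =>
      intro hk
      obtain ⟨z, hzU, hz⟩ := ih (Nat.le_of_succ_le hk)
      have ht : ((k + 1 : ℕ) : ℝ) / n ∈ Icc (0 : ℝ) 1 :=
        ⟨by positivity, div_le_one_of_le₀ (by exact_mod_cast hk) hn.le⟩
      have hsmall : ‖f z + (((k + 1 : ℕ) : ℝ) / n) • g z‖ < δ := by
        have hshift : f z + (((k + 1 : ℕ) : ℝ) / n) • g z = (1 / (n : ℝ)) • g z := by
          rw [← sub_eq_zero, ← hz]; push_cast; module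
        rw [hshift, norm_smul, Real.norm_of_nonneg (by positivity), one_div, inv_mul_eq_div]
        exact (div_le_div_of_nonneg_right (hM z hzU) hn.le).trans_lt hstep
      exact exists_mem_eq_zero_of_norm_lt_of_le_norm_frontier hU
        (hf.add (hg.const_smul (((k + 1 : ℕ) : ℝ) / n))) (hfr _ ht) (subset_closure hzU) hsmall
  simpa [hn.ne'] using hzeros n le_rfl

end

theorem rouche_type_fixed_point_general
    (b : ℂ) (ε : ℝ)
    (W : Set ℂ)
    (hWbdd : Bornology.IsBounded W)
    (hWcl : closure W ⊆ Metric.ball b ε)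
    (Ω : Set ℂ) (hWΩ : closure W ⊆ Ω)
    (h : ℂ → ℂ) (hhol : DifferentiableOn ℂ h Ω)
    (hbd : ∀ z ∈ frontier W, ‖h z - b‖ = ε)
    (hval : ∃ w ∈ W, h w = b) :
    ∃ ξ ∈ W, h ξ = ξ := by
  obtain ⟨r, hrε, hWr⟩ := exists_lt_subset_ball isClosed_closure hWcl
  have hfr : ∀ t ∈ Icc (0 : ℝ) 1, ∀ x ∈ frontier W, ε - r ≤ ‖h x - b + t • (b - x)‖ := by
    intro t ht x hx
    have hxr : ‖t • (b - x)‖ ≤ r := by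
      rw [norm_smul, Real.norm_of_nonneg ht.1, ← dist_eq_norm, dist_comm]
      exact (mul_le_of_le_one_left dist_nonneg ht.2).trans
        (mem_ball.mp (hWr (frontier_subset_closure hx))).le
    calc ε - r ≤ ‖h x - b‖ - ‖-(t • (b - x))‖ := by rw [hbd x hx, norm_neg]; linarith
      _ ≤ ‖h x - b + t • (b - x)‖ := by simpa using norm_sub_norm_le (h x - b) (-(t • (b - x)))
  have hM : ∀ z ∈ W, ‖b - z‖ ≤ ε := fun z hz => by
    rw [← dist_eq_norm, dist_comm]; exact (mem_ball.mp (hWcl (subset_closure hz))).le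
  obtain ⟨w, hwW, hwb⟩ := hval
  obtain ⟨ξ, hξW, hξ⟩ := exists_mem_add_eq_zero_of_homotopy hWbdd
    ((hhol.mono hWΩ).diffContOnCl.sub_const b) (differentiable_id.diffContOnCl.const_sub b)
    (sub_pos.mpr hrε) hfr hM ⟨w, hwW, sub_eq_zero.mpr hwb⟩
  exact ⟨ξ, hξW, by rw [id] at hξ; linear_combination hξ⟩

/-- **Rouché-type fixed point lemma.** Let `W` be a bounded domain with closure
contained in `B(b, ε)`, and let `h` be holomorphic on an open set containing
the closure of `W`, with `|h(z) - b| = ε` on the boundary of `W`. If `h` takes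
the value `b` somewhere in `W`, then `h` has a fixed point in `W`. -/
theorem rouche_type_fixed_point
    (b : ℂ) (ε : ℝ) (hε : 0 < ε)
    (W : Set ℂ) (hWopen : IsOpen W) (hWconn : IsConnected W)
    (hWbdd : Bornology.IsBounded W)
    (hWcl : closure W ⊆ Metric.ball b ε)
    (Ω : Set ℂ) (hΩ : IsOpen Ω) (hWΩ : closure W ⊆ Ω)
    (h : ℂ → ℂ) (hhol : DifferentiableOn ℂ h Ω)
    (hbd : ∀ z ∈ frontier W, ‖h z - b‖ = ε)
    (hval : ∃ w ∈ W, h w = b) :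
    ∃ ξ ∈ W, h ξ = ξ :=
  rouche_type_fixed_point_general b ε W hWbdd hWcl Ω hWΩ h hhol hbd hval
end
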